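/- Let G be a group and A : G → SU(2) an irreducible homomorphism. Then the set of homomorphisms χ : G → {±1} such that χ·A is conjugate to A in SU(2) forms a subgroup of Hom(G, {±1}) of order at most 4. -/

import Mathlib

open Quaternion

/-- The group `SU(2)`, identified with the group of unit quaternions. -/
noncomputable abbrev SU2 : Type := Metric.sphere (0 : ℍ[ℝ]) 1

/-- The quaternion `i`. -/
noncomputable def qi : ℍ[ℝ] := ⟨0,1,0,0⟩
/-- The quaternion `j`. -/
noncomputable def qj : ℍ[ℝ] := ⟨0,0,1,0⟩
/-- The quaternion `k`. -/
noncomputable def qk : ℍ[ℝ] := ⟨0,0,0,1⟩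

lemma mem_SU2_of_normSq {q : ℍ[ℝ]} (h : Quaternion.normSq q = 1) :
    q ∈ Metric.sphere (0 : ℍ[ℝ]) 1 := by
  rw [mem_sphere_zero_iff_norm, norm_eq_sqrt_real_inner, Quaternion.inner_self, h]
  simp

/-- `i` as a unit quaternion. -/
noncomputable def iSU : SU2 := ⟨qi, mem_SU2_of_normSq (by rw [Quaternion.normSq_def']; simp [qi])⟩
/-- `j` as a unit quaternion. -/
noncomputable def jSU : SU2 := ⟨qj, mem_SU2_of_normSq (by rw [Quaternion.normSq_def']; simp [qj])⟩
/-- `k` as a unit quaternion. -/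
noncomputable def kSU : SU2 := ⟨qk, mem_SU2_of_normSq (by rw [Quaternion.normSq_def']; simp [qk])⟩
/-- `-1` as a unit quaternion. -/
noncomputable def negOne : SU2 := ⟨-1, by simp⟩

/-- The circle subgroup `S¹` of unit complex numbers `a + b·i` inside the unit
quaternions. -/
noncomputable def circleSet : Set SU2 :=
  {u | (u : ℍ[ℝ]).imJ = 0 ∧ (u : ℍ[ℝ]).imK = 0}

/-- The binary dihedral group `S¹ ∪ j·S¹` inside the unit quaternions. -/
noncomputable def binDihSet : Set SU2 :=
  circleSet ∪ (fun w => jSU * w) '' circleSet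

/-- A homomorphism to `SU(2)` is irreducible if its image is not contained in any
conjugate of the circle `S¹`. -/
noncomputable def IsIrredRep {G : Type*} [Group G] (A : G →* SU2) : Prop :=
  ¬ ∃ g : SU2, ∀ x : G, g * A x * g⁻¹ ∈ circleSet

/-- The embedding of `{±1}` into the center of `SU(2)`. -/
noncomputable def sgn (s : ℤˣ) : SU2 := if s = 1 then 1 else negOne

/-!
If `u` conjugates `A` to `χ · A`, then `u²` commutes with the image of `A`, so irreducibility
forces `u² = ±1`; `u² = 1` would make `u` central and `χ` trivial, hence for `χ ≠ 1` the
conjugator `u` is a purely imaginary unit quaternion. Conjugators `u_χ`, `u_ψ` give the conjugator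
`u_χ u_ψ⁻¹` of `χ ψ⁻¹`, so for `χ ≠ ψ` the inner product `⟨u_χ, u_ψ⟩ = Re (u_χ u_ψ⁻¹)` vanishes.
A choice of conjugators is therefore an orthonormal family in `ℍ ≅ ℝ⁴`.
-/

@[simp] lemma re_qi : qi.re = 0 := rfl
@[simp] lemma imI_qi : qi.imI = 1 := rfl
@[simp] lemma imJ_qi : qi.imJ = 0 := rfl
@[simp] lemma imK_qi : qi.imK = 0 := rfl

lemma coe_negOne : ((negOne : SU2) : ℍ[ℝ]) = -1 := rfl

lemma negOne_mul_self : negOne * negOne = 1 := Subtype.ext (by simp [coe_negOne])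

lemma commute_negOne (u : SU2) : Commute negOne u :=
  Subtype.ext (by simp [coe_negOne])

lemma normSq_coe_SU2 (u : SU2) : normSq (u : ℍ[ℝ]) = 1 := by
  rw [normSq_eq_norm_mul_self, mem_sphere_zero_iff_norm.mp u.2, mul_one]

lemma inner_coe_SU2 (p q : SU2) :
    inner ℝ (p : ℍ[ℝ]) (q : ℍ[ℝ]) = ((p * q⁻¹ : SU2) : ℍ[ℝ]).re := by
  rw [Quaternion.inner_def, Metric.unitSphere.coe_mul, Metric.unitSphere.coe_inv,
    Quaternion.inv_def, normSq_coe_SU2, inv_one, one_smul]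

lemma eq_one_or_eq_negOne_of_mul_self_eq_one {u : SU2} (h : u * u = 1) :
    u = 1 ∨ u = negOne := by
  rcases mul_self_eq_one_iff.mp (congrArg Subtype.val h) with h1 | h1
  · exact .inl (Subtype.ext h1)
  · exact .inr (Subtype.ext h1)

lemma re_eq_zero_of_mul_self_eq_negOne {u : SU2} (h : u * u = negOne) :
    (u : ℍ[ℝ]).re = 0 := by
  have hre := congrArg (fun v : SU2 => (v : ℍ[ℝ]).re) h
  have hn := normSq_coe_SU2 u
  simp only [Metric.unitSphere.coe_mul, Quaternion.re_mul, coe_negOne] at hre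
  rw [normSq_def'] at hn
  norm_num at hre
  nlinarith

lemma sgn_one : sgn 1 = 1 := if_pos rfl

lemma sgn_eq_one_iff {s : ℤˣ} : sgn s = 1 ↔ s = 1 := by
  refine ⟨fun h => ?_, fun h => h ▸ sgn_one⟩
  by_contra hs
  rw [sgn, if_neg hs] at h
  have := congrArg (fun v : SU2 => (v : ℍ[ℝ]).re) h
  norm_num [coe_negOne] at this

lemma sgn_mul (s t : ℤˣ) : sgn (s * t) = sgn s * sgn t := by
  rcases Int.units_eq_one_or s with rfl | rfl <;> rcases Int.units_eq_one_or t with rfl | rfl <;>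
    simp [sgn, negOne_mul_self]

lemma commute_sgn (s : ℤˣ) (u : SU2) : Commute (sgn s) u := by
  rcases Int.units_eq_one_or s with rfl | rfl
  · simp [sgn_one]
  · exact commute_negOne u

lemma sgn_mul_conj (s : ℤˣ) (u x : SU2) : sgn s * (u * x * u⁻¹) = u * (sgn s * x) * u⁻¹ := by
  rw [← mul_assoc, ← mul_assoc, (commute_sgn s u).eq, mul_assoc u]

lemma sgn_mul_sgn_mul_self (s : ℤˣ) (x : SU2) : sgn s * (sgn s * x) = x := by
  rw [← mul_assoc, ← sgn_mul, Int.units_mul_self, sgn_one, one_mul]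

lemma exists_conj_eq_conj_of_ne_zero {c : ℍ[ℝ]} (hc : c ≠ 0) :
    ∃ w : SU2, ∀ x : SU2, ((w * x * w⁻¹ : SU2) : ℍ[ℝ]) = c * x * c⁻¹ := by
  have hnc : ‖c‖ ≠ 0 := norm_ne_zero_iff.mpr hc
  refine ⟨⟨‖c‖⁻¹ • c, by simp [norm_smul, hnc]⟩, fun x => ?_⟩
  simp only [Metric.unitSphere.coe_mul, Metric.unitSphere.coe_inv, smul_inv₀, smul_mul_assoc,
    mul_smul_comm, smul_smul, inv_inv, mul_inv_cancel₀ hnc, one_smul]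

lemma exists_conj_mem_circleSet (u : SU2) : ∃ w : SU2, w * u * w⁻¹ ∈ circleSet := by
  set q : ℍ[ℝ] := (u : ℍ[ℝ])
  set r := √(q.imI ^ 2 + q.imJ ^ 2 + q.imK ^ 2)
  set c : ℍ[ℝ] := r • qi + q.im
  set t : ℍ[ℝ] := q.re + r • qi
  have hr : r ^ 2 = q.imI ^ 2 + q.imJ ^ 2 + q.imK ^ 2 := Real.sq_sqrt (by positivity)
  -- `c` turns `q.im` onto the `i`-axis: as `q.im ^ 2 = -r ^ 2`, both sides are
  -- `q.re • c + r • (qi * q.im) - r ^ 2`.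
  have hct : c * q = t * c := by
    ext <;> simp [c, t] <;> nlinarith [hr]
  by_cases hc : c = 0
  · refine ⟨1, ?_⟩
    simp only [one_mul, inv_one, mul_one]
    exact ⟨by simpa [c] using congrArg QuaternionAlgebra.imJ hc,
      by simpa [c] using congrArg QuaternionAlgebra.imK hc⟩
  · obtain ⟨w, hw⟩ := exists_conj_eq_conj_of_ne_zero hc
    have hwt : ((w * u * w⁻¹ : SU2) : ℍ[ℝ]) = t := by
      rw [hw, hct, mul_inv_cancel_right₀ hc]
    exact ⟨w, by simp [hwt, t], by simp [hwt, t]⟩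

lemma mem_circleSet_of_commute {t x : SU2} (ht : t ∈ circleSet) (h1 : t ≠ 1) (hn : t ≠ negOne)
    (hx : Commute x t) : x ∈ circleSet := by
  obtain ⟨htJ, htK⟩ := ht
  have hI : (t : ℍ[ℝ]).imI ≠ 0 := by
    intro hI
    have hre : (t : ℍ[ℝ]).re = 1 ∨ (t : ℍ[ℝ]).re = -1 := by
      simpa [normSq_def', hI, htJ, htK] using normSq_coe_SU2 t
    rcases hre with h | h
    · exact h1 (Subtype.ext (by ext <;> simp [h, hI, htJ, htK]))
    · exact hn (Subtype.ext (by ext <;> simp [coe_negOne, h, hI, htJ, htK]))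
  have hxt : (x : ℍ[ℝ]) * t = t * x := congrArg Subtype.val hx.eq
  have hJ := congrArg QuaternionAlgebra.imJ hxt
  have hK := congrArg QuaternionAlgebra.imK hxt
  simp only [Quaternion.imJ_mul, Quaternion.imK_mul, htJ, htK] at hJ hK
  refine ⟨?_, ?_⟩
  · have : (x : ℍ[ℝ]).imJ * (t : ℍ[ℝ]).imI = 0 := by linarith
    exact (mul_eq_zero.mp this).resolve_right hI
  · have : (x : ℍ[ℝ]).imK * (t : ℍ[ℝ]).imI = 0 := by linarith
    exact (mul_eq_zero.mp this).resolve_right hI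

section Twist

variable {G : Type*} [Group G] {A : G →* SU2} {χ ψ : G →* ℤˣ} {u v : SU2}

theorem IsIrredRep.eq_one_or_eq_negOne_of_commute (hA : IsIrredRep A)
    (hu : ∀ g, Commute u (A g)) : u = 1 ∨ u = negOne := by
  by_contra! h
  obtain ⟨w, hw⟩ := exists_conj_mem_circleSet u
  refine hA ⟨w, fun g => mem_circleSet_of_commute hw ?_ ?_ ((hu g).symm.map (MulAut.conj w))⟩
  · exact conj_eq_one_iff.not.mpr h.1
  · intro hneg
    rw [mul_inv_eq_iff_eq_mul, (commute_negOne w).eq, mul_left_cancel_iff] at hneg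
    exact h.2 hneg

def IsTwistConjugator (A : G →* SU2) (χ : G →* ℤˣ) (u : SU2) : Prop :=
  ∀ g, sgn (χ g) * A g = u * A g * u⁻¹

lemma isTwistConjugator_one : IsTwistConjugator A 1 1 := fun g => by
  simp [sgn_one]

lemma IsTwistConjugator.mul (hu : IsTwistConjugator A χ u) (hv : IsTwistConjugator A ψ v) :
    IsTwistConjugator A (χ * ψ) (v * u) := fun g =>
  calc sgn ((χ * ψ) g) * A g = sgn (χ g) * (v * A g * v⁻¹) := by
        rw [MonoidHom.mul_apply, sgn_mul, mul_assoc, hv g]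
    _ = v * (sgn (χ g) * A g) * v⁻¹ := sgn_mul_conj _ _ _
    _ = v * u * A g * (v * u)⁻¹ := by rw [hu g]; group

lemma IsTwistConjugator.inv (hu : IsTwistConjugator A χ u) : IsTwistConjugator A χ⁻¹ u⁻¹ :=
  fun g =>
  calc sgn (χ⁻¹ g) * A g = u⁻¹ * (u * (sgn (χ g) * A g) * u⁻¹) * u := by
        rw [MonoidHom.inv_apply, Int.units_inv_eq_self]; group
    _ = u⁻¹ * A g * u⁻¹⁻¹ := by rw [← sgn_mul_conj, ← hu g, sgn_mul_sgn_mul_self, inv_inv]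

lemma IsTwistConjugator.re_eq_zero (hA : IsIrredRep A) (hχ : χ ≠ 1)
    (hu : IsTwistConjugator A χ u) : (u : ℍ[ℝ]).re = 0 := by
  have hcomm : ∀ g, Commute (u * u) (A g) := fun g => by
    refine mul_inv_eq_iff_eq_mul.mp ?_
    calc u * u * A g * (u * u)⁻¹ = u * (u * A g * u⁻¹) * u⁻¹ := by group
      _ = A g := by rw [← hu g, ← sgn_mul_conj, ← hu g, sgn_mul_sgn_mul_self]
  rcases hA.eq_one_or_eq_negOne_of_commute hcomm with h | h
  · have hcentral : ∀ x, Commute u x := by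
      rcases eq_one_or_eq_negOne_of_mul_self_eq_one h with rfl | rfl
      exacts [Commute.one_left, commute_negOne]
    refine absurd (MonoidHom.ext fun g => ?_) hχ
    rw [MonoidHom.one_apply, ← sgn_eq_one_iff, ← mul_eq_right (b := A g), hu g,
      (hcentral (A g)).eq, mul_inv_cancel_right]
  · exact re_eq_zero_of_mul_self_eq_negOne h

variable (A) in
def twistStabilizer : Subgroup (G →* ℤˣ) where
  carrier := {χ | ∃ u, IsTwistConjugator A χ u}
  one_mem' := ⟨1, isTwistConjugator_one⟩
  mul_mem' := fun ⟨_, hu⟩ ⟨_, hv⟩ => ⟨_, hu.mul hv⟩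
  inv_mem' := fun ⟨_, hu⟩ => ⟨_, hu.inv⟩

lemma orthonormal_twistConjugators (hA : IsIrredRep A) {u : twistStabilizer A → SU2}
    (hu : ∀ χ : twistStabilizer A, IsTwistConjugator A χ (u χ)) :
    Orthonormal ℝ fun χ => (u χ : ℍ[ℝ]) := by
  classical
  rw [orthonormal_iff_ite]
  intro χ ψ
  rw [inner_coe_SU2]
  split_ifs with h
  · simp [h]
  · refine ((hu ψ).inv.mul (hu χ)).re_eq_zero hA ?_
    rwa [Ne, inv_mul_eq_one, eq_comm, ← Subtype.ext_iff]

lemma card_twistStabilizer_le_four (hA : IsIrredRep A) : Nat.card (twistStabilizer A) ≤ 4 := by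
  choose u hu using fun χ : twistStabilizer A => χ.2
  have hcard := (orthonormal_twistConjugators hA hu).linearIndependent.cardinalMk_le_finrank
  rw [Quaternion.finrank_eq_four] at hcard
  exact (Cardinal.toNat_le_toNat hcard Cardinal.natCast_lt_aleph0).trans_eq
    (Cardinal.toNat_natCast 4)

end Twist

/-- For an irreducible `A : G →* SU(2)`, the characters `χ : G →* {±1}` with `χ·A`
conjugate to `A` form a subgroup of `Hom(G, {±1})` of order at most `4`. -/
theorem stabilizer_characters_subgroup_card_le_four {G : Type*} [Group G]
    (A : G →* SU2) (hA : IsIrredRep A) :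
    ∃ H : Subgroup (G →* ℤˣ),
      (H : Set (G →* ℤˣ)) =
        {χ : G →* ℤˣ | ∃ u : SU2, ∀ g : G, sgn (χ g) * A g = u * A g * u⁻¹} ∧
      Nat.card H ≤ 4 :=
  ⟨twistStabilizer A, rfl, card_twistStabilizer_le_four hA⟩
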